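/- arXiv:1302.5906 — 2 statements merged into one kernel-verified Lean document; each statement's English description precedes it below -/
import Mathlib

section
/- The maximum of the Λ-periodic Gaussian function f_{σ,Λ} over ℝⁿ is attained at the points of Λ; equivalently, f_{σ,Λ}(x) ≤ f_{σ,Λ}(0) for all x ∈ ℝⁿ. -/
open Real

noncomputable section

/-- Squared Euclidean norm on `Fin n → ℝ`. -/
def sqnorm {n : ℕ} (v : Fin n → ℝ) : ℝ := ∑ i, v i ^ 2

/-- Lattice point `B z` for integer vector `z`. -/
def latp {n : ℕ} (B : Matrix (Fin n) (Fin n) ℝ) (z : Fin n → ℤ) : Fin n → ℝ :=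
  B.mulVec (fun j => (z j : ℝ))

/-- The Λ-periodic Gaussian `f_{σ,Λ}(x)`. -/
def periodicGauss {n : ℕ} (B : Matrix (Fin n) (Fin n) ℝ) (σ : ℝ) (x : Fin n → ℝ) : ℝ :=
  (2 * π * σ ^ 2) ^ (-(n : ℝ) / 2) *
    ∑' z : Fin n → ℤ, Real.exp (-(sqnorm (x - latp B z)) / (2 * σ ^ 2))

/-- The flatness factor `ε_Λ(σ) = max_x |V(Λ) f_{σ,Λ}(x) − 1|`. -/
def flatness {n : ℕ} (B : Matrix (Fin n) (Fin n) ℝ) (σ : ℝ) : ℝ :=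
  ⨆ x : Fin n → ℝ, |(|B.det|) * periodicGauss B σ x - 1|

/-! The Gaussian kernel `K(u) = exp (-‖u‖² / τ)` is positive definite: splitting off
`exp (-‖p‖² / τ) exp (-‖q‖² / τ)` from `K (p - q)` leaves `exp (2 ⟪p, q⟫ / τ)`, a power series
with nonnegative coefficients in `⟪p, q⟫`, whose powers are Gram kernels of tensor powers.
Applied to the points `B i` and `B i + x` with weights `1` and `-1`, positive definiteness gives
`∑_{i,j ∈ F} K (x - B (i - j)) ≤ ∑_{i,j ∈ F} K (B (i - j))` for every finite `F ⊆ ℤⁿ`.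
For a cube `F` of side `2N + 1` the two sides are `#F` times the lattice sums at `x` and at `0`,
up to boundary terms of relative size `O(1/N)`; letting `N → ∞` replaces Poisson summation. -/

open Finset

section GaussianKernel

variable {n : ℕ}

theorem sqnorm_eq_dotProduct (v : Fin n → ℝ) : sqnorm v = v ⬝ᵥ v := by
  simp only [sqnorm, dotProduct, sq]

theorem sqnorm_neg (v : Fin n → ℝ) : sqnorm (-v) = sqnorm v := by
  simp [sqnorm]

theorem sqnorm_sub (a b : Fin n → ℝ) :
    sqnorm (a - b) = sqnorm a + sqnorm b - 2 * (a ⬝ᵥ b) := by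
  simp only [sqnorm_eq_dotProduct, sub_dotProduct, dotProduct_sub, dotProduct_comm b a]
  ring

theorem sum_sum_mul_dotProduct_pow_nonneg {ι κ : Type*} [Fintype κ] (s : Finset ι)
    (p : ι → κ → ℝ) (d : ι → ℝ) (k : ℕ) :
    0 ≤ ∑ i ∈ s, ∑ j ∈ s, d i * d j * (p i ⬝ᵥ p j) ^ k := by
  -- `(p i ⬝ᵥ p j) ^ k` is the dot product of the `k`-th tensor powers of `p i` and `p j`.
  set P : ι → (Fin k → κ) → ℝ := fun i f => d i * ∏ l, p i (f l)
  have htensor : ∀ i j, d i * d j * (p i ⬝ᵥ p j) ^ k = ∑ f, P i f * P j f := fun i j => by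
    rw [dotProduct, Fintype.sum_pow, mul_sum]
    exact sum_congr rfl fun f _ => by simp only [P, prod_mul_distrib]; ring
  calc 0 ≤ ∑ f : Fin k → κ, (∑ i ∈ s, P i f) ^ 2 := sum_nonneg fun f _ => sq_nonneg _
    _ = _ := by
      simp_rw [htensor, sq, sum_mul_sum, sum_comm (s := univ) (t := s)]

theorem sum_sum_mul_exp_dotProduct_nonneg {ι κ : Type*} [Fintype κ] (s : Finset ι)
    (p : ι → κ → ℝ) (d : ι → ℝ) {t : ℝ} (ht : 0 ≤ t) :
    0 ≤ ∑ i ∈ s, ∑ j ∈ s, d i * d j * Real.exp (t * (p i ⬝ᵥ p j)) := by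
  have hseries : HasSum (fun k : ℕ => ∑ i ∈ s, ∑ j ∈ s,
      d i * d j * ((t * (p i ⬝ᵥ p j)) ^ k / k.factorial))
      (∑ i ∈ s, ∑ j ∈ s, d i * d j * Real.exp (t * (p i ⬝ᵥ p j))) :=
    hasSum_sum fun i _ => hasSum_sum fun j _ => by
      rw [Real.exp_eq_exp_ℝ]
      exact (NormedSpace.expSeries_div_hasSum_exp (t * (p i ⬝ᵥ p j))).mul_left (d i * d j)
  refine hseries.nonneg fun k => ?_
  have hfactor : ∀ i j, d i * d j * ((t * (p i ⬝ᵥ p j)) ^ k / k.factorial)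
      = t ^ k / k.factorial * (d i * d j * (p i ⬝ᵥ p j) ^ k) := fun i j => by ring
  simp_rw [hfactor, ← mul_sum]
  exact mul_nonneg (by positivity) (sum_sum_mul_dotProduct_pow_nonneg s p d k)

theorem sum_sum_mul_exp_neg_sqnorm_sub_nonneg {ι : Type*} (s : Finset ι)
    (p : ι → Fin n → ℝ) (c : ι → ℝ) {τ : ℝ} (hτ : 0 < τ) :
    0 ≤ ∑ i ∈ s, ∑ j ∈ s, c i * c j * Real.exp (-(sqnorm (p i - p j)) / τ) := by
  set d : ι → ℝ := fun i => c i * Real.exp (-(sqnorm (p i)) / τ)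
  have hfactor : ∀ i j, c i * c j * Real.exp (-(sqnorm (p i - p j)) / τ)
      = d i * d j * Real.exp (2 / τ * (p i ⬝ᵥ p j)) := fun i j => by
    have hexponent : -(sqnorm (p i - p j)) / τ
        = -(sqnorm (p i)) / τ + -(sqnorm (p j)) / τ + 2 / τ * (p i ⬝ᵥ p j) := by
      rw [sqnorm_sub]; ring
    simp only [d, hexponent, Real.exp_add]
    ring
  simp_rw [hfactor]
  exact sum_sum_mul_exp_dotProduct_nonneg s p d (by positivity)

theorem sum_sum_exp_neg_sqnorm_sub_sub_le {ι : Type*} (s : Finset ι) (a : ι → Fin n → ℝ)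
    (x : Fin n → ℝ) {τ : ℝ} (hτ : 0 < τ) :
    ∑ i ∈ s, ∑ j ∈ s, Real.exp (-(sqnorm (x - (a i - a j))) / τ)
      ≤ ∑ i ∈ s, ∑ j ∈ s, Real.exp (-(sqnorm (a i - a j)) / τ) := by
  have h := sum_sum_mul_exp_neg_sqnorm_sub_nonneg (s.disjSum s)
    (Sum.elim a fun i => a i + x) (Sum.elim 1 (-1)) hτ
  have hswap : ∑ i ∈ s, ∑ j ∈ s, Real.exp (-(sqnorm (a i + x - a j)) / τ)
      = ∑ i ∈ s, ∑ j ∈ s, Real.exp (-(sqnorm (x - (a i - a j))) / τ) := by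
    rw [sum_comm]
    exact sum_congr rfl fun i _ => sum_congr rfl fun j _ => by
      rw [show a j + x - a i = x - (a i - a j) by abel]
  have hsymm : ∀ i j, sqnorm (a i - (a j + x)) = sqnorm (x - (a i - a j)) := fun i j => by
    rw [← sqnorm_neg, show -(a i - (a j + x)) = x - (a i - a j) by abel]
  simp only [sum_disjSum, Sum.elim_inl, Sum.elim_inr, Pi.one_apply, Pi.neg_apply, one_mul,
    mul_one, neg_mul, mul_neg, sum_add_distrib, sum_neg_distrib, hsymm,
    add_sub_add_right_eq_sub, hswap] at h
  linarith

end GaussianKernel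

section Averaging

theorem sum_sum_sub_le_card_mul_tsum {α : Type*} [AddGroup α] {h : α → ℝ} (hh : 0 ≤ h)
    (hs : Summable h) (F : Finset α) :
    ∑ i ∈ F, ∑ j ∈ F, h (i - j) ≤ #F * ∑' z, h z := by
  have hrow : ∀ j, ∑ i ∈ F, h (i - j) ≤ ∑' z, h z := fun j => by
    rw [← (Equiv.subRight j).tsum_eq h]
    exact ((Equiv.subRight j).summable_iff.mpr hs).sum_le_tsum F fun _ _ => hh _
  rw [sum_comm, ← nsmul_eq_mul]
  exact sum_le_card_nsmul F _ _ fun j _ => hrow j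

theorem card_mul_sum_le_sum_sum_sub {α : Type*} [AddGroup α] {g : α → ℝ} (hg : 0 ≤ g)
    {G H F : Finset α} (hHF : H ⊆ F) (hGHF : ∀ v ∈ G, ∀ w ∈ H, v + w ∈ F) :
    #H * ∑ v ∈ G, g v ≤ ∑ i ∈ F, ∑ j ∈ F, g (i - j) := by
  have hrow : ∀ j ∈ H, ∑ v ∈ G, g v ≤ ∑ i ∈ F, g (i - j) := fun j hj => by
    calc ∑ v ∈ G, g v = ∑ i ∈ G.map (addRightEmbedding j), g (i - j) := by simp
      _ ≤ ∑ i ∈ F, g (i - j) := by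
        refine sum_le_sum_of_subset_of_nonneg ?_ fun _ _ _ => hg _
        intro i hi
        obtain ⟨v, hv, rfl⟩ := mem_map.mp hi
        exact hGHF v hv j hj
  calc #H * ∑ v ∈ G, g v = ∑ j ∈ H, ∑ v ∈ G, g v := by rw [sum_const, nsmul_eq_mul]
    _ ≤ ∑ j ∈ H, ∑ i ∈ F, g (i - j) := sum_le_sum hrow
    _ ≤ ∑ j ∈ F, ∑ i ∈ F, g (i - j) :=
        sum_le_sum_of_subset_of_nonneg hHF fun _ _ _ => sum_nonneg fun _ _ => hg _
    _ = ∑ i ∈ F, ∑ j ∈ F, g (i - j) := sum_comm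

variable (ι : Type*) [Fintype ι] [DecidableEq ι]

def intCube (N : ℕ) : Finset (ι → ℤ) :=
  Fintype.piFinset fun _ => Icc (-(N : ℤ)) N

variable {ι}

theorem mem_intCube {N : ℕ} {z : ι → ℤ} : z ∈ intCube ι N ↔ ∀ i, |z i| ≤ N := by
  simp [intCube, abs_le]

theorem card_intCube (N : ℕ) : (#(intCube ι N) : ℝ) = (2 * N + 1) ^ Fintype.card ι := by
  have hside : #(Icc (-(N : ℤ)) N) = 2 * N + 1 := by
    rw [Int.card_Icc]; omega
  rw [intCube, Fintype.card_piFinset, prod_const, card_univ, hside]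
  push_cast
  rfl

theorem exists_subset_intCube (G : Finset (ι → ℤ)) : ∃ M, G ⊆ intCube ι M := by
  refine ⟨G.sup fun v => univ.sup fun i => (v i).natAbs, fun v hv => mem_intCube.mpr fun i => ?_⟩
  have hle : (v i).natAbs ≤ G.sup fun v => univ.sup fun i => (v i).natAbs :=
    (le_sup (f := fun i => (v i).natAbs) (mem_univ i)).trans
      (le_sup (f := fun v => univ.sup fun i => (v i).natAbs) hv)
  rw [Int.abs_eq_natAbs]
  exact_mod_cast hle

theorem add_mem_intCube {M N : ℕ} {v w : ι → ℤ} (hv : v ∈ intCube ι M) (hw : w ∈ intCube ι N) :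
    v + w ∈ intCube ι (M + N) := by
  rw [mem_intCube] at *
  intro i
  push_cast
  exact (abs_add_le _ _).trans (add_le_add (hv i) (hw i))

theorem intCube_mono {M N : ℕ} (h : M ≤ N) : intCube ι M ⊆ intCube ι N := fun z hz => by
  rw [mem_intCube] at *
  exact fun i => (hz i).trans (by exact_mod_cast h)

theorem tendsto_two_mul_add_one_ratio_pow (M d : ℕ) : Filter.Tendsto
    (fun N : ℕ => ((2 * (M + N) + 1 : ℝ) / (2 * N + 1)) ^ d) Filter.atTop (nhds 1) := by
  have hden : Filter.Tendsto (fun N : ℕ => (2 * N + 1 : ℝ)) Filter.atTop Filter.atTop :=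
    Filter.tendsto_atTop_mono (fun N => by linarith [(N.cast_nonneg : (0 : ℝ) ≤ N)])
      tendsto_natCast_atTop_atTop
  have hratio : Filter.Tendsto (fun N : ℕ => 1 + 2 * M / (2 * N + 1 : ℝ)) Filter.atTop
      (nhds 1) := by
    simpa using (tendsto_const_nhds (x := (2 * M : ℝ))).div_atTop hden |>.const_add 1
  have hpow := hratio.pow d
  rw [one_pow] at hpow
  refine hpow.congr fun N => ?_
  congr 1
  field_simp
  ring

theorem tsum_le_tsum_of_sum_sum_intCube_le {g h : (ι → ℤ) → ℝ} (hg : 0 ≤ g) (hh : 0 ≤ h)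
    (hs : Summable h) (hcube : ∀ N, ∑ i ∈ intCube ι N, ∑ j ∈ intCube ι N, g (i - j)
      ≤ ∑ i ∈ intCube ι N, ∑ j ∈ intCube ι N, h (i - j)) :
    ∑' z, g z ≤ ∑' z, h z := by
  refine Real.tsum_le_of_sum_le hg fun G => ?_
  obtain ⟨M, hGM⟩ := exists_subset_intCube G
  have hbound : ∀ N : ℕ, (2 * N + 1 : ℝ) ^ Fintype.card ι * ∑ v ∈ G, g v
      ≤ (2 * (M + N) + 1 : ℝ) ^ Fintype.card ι * ∑' z, h z := fun N => by
    rw [← card_intCube, ← Nat.cast_add, ← card_intCube]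
    calc _ ≤ ∑ i ∈ intCube ι (M + N), ∑ j ∈ intCube ι (M + N), g (i - j) :=
          card_mul_sum_le_sum_sum_sub hg (intCube_mono (Nat.le_add_left N M))
            fun v hv w hw => add_mem_intCube (hGM hv) hw
      _ ≤ _ := hcube (M + N)
      _ ≤ _ := sum_sum_sub_le_card_mul_tsum hh hs _
  have hlim := (tendsto_two_mul_add_one_ratio_pow M (Fintype.card ι)).const_mul (∑' z, h z)
  rw [mul_one] at hlim
  refine ge_of_tendsto' hlim fun N => ?_
  rw [div_pow, mul_div_assoc', le_div_iff₀ (by positivity), mul_comm, mul_comm (∑' z, h z)]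
  exact hbound N

end Averaging

section Summability

theorem summable_pi_prod_of_nonneg {κ α : Type*} [Fintype κ] {f : α → ℝ} (hf : 0 ≤ f)
    (hs : Summable f) : Summable fun z : κ → α => ∏ k, f (z k) := by
  classical
  refine summable_of_sum_le (c := ∏ _k : κ, ∑' a, f a)
    (fun z => prod_nonneg fun k _ => hf _) fun G => ?_
  calc ∑ z ∈ G, ∏ k, f (z k)
      ≤ ∑ z ∈ Fintype.piFinset fun k => G.image (· k), ∏ k, f (z k) :=
        sum_le_sum_of_subset_of_nonneg
          (fun z hz => Fintype.mem_piFinset.mpr fun k => mem_image_of_mem _ hz)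
          fun _ _ _ => prod_nonneg fun k _ => hf _
    _ = ∏ k, ∑ a ∈ G.image (· k), f a := (prod_univ_sum _ _).symm
    _ ≤ ∏ _k : κ, ∑' a, f a :=
        prod_le_prod (fun k _ => sum_nonneg fun _ _ => hf _)
          fun k _ => hs.sum_le_tsum _ fun _ _ => hf _

theorem summable_exp_neg_sq_div {s : ℝ} (hs : 0 < s) :
    Summable fun m : ℤ => Real.exp (-(m : ℝ) ^ 2 / s) := by
  refine (HurwitzZeta.hasSum_int_evenKernel 0 (t := 1 / (π * s)) (by positivity)).summable.congr
    fun m => congrArg Real.exp ?_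
  field_simp
  ring

theorem sqnorm_mulVec_le {m n : ℕ} (A : Matrix (Fin m) (Fin n) ℝ) (v : Fin n → ℝ) :
    sqnorm (A.mulVec v) ≤ (∑ i, ∑ j, A i j ^ 2) * sqnorm v := by
  rw [sum_mul]
  refine sum_le_sum fun i _ => ?_
  simpa [Matrix.mulVec, dotProduct, sqnorm] using sum_mul_sq_le_sq_mul_sq univ (A i) v

theorem summable_exp_neg_sqnorm_latp {n : ℕ} {B : Matrix (Fin n) (Fin n) ℝ} (hB : B.det ≠ 0)
    {τ : ℝ} (hτ : 0 < τ) : Summable fun z => Real.exp (-(sqnorm (latp B z)) / τ) := by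
  set C := ∑ i, ∑ j, B⁻¹ i j ^ 2 + 1
  have hC : 0 < C := by positivity
  have hcoercive : ∀ z, sqnorm (fun k => (z k : ℝ)) ≤ C * sqnorm (latp B z) := fun z => by
    have hinv : B⁻¹.mulVec (latp B z) = fun k => (z k : ℝ) := by
      rw [latp, Matrix.mulVec_mulVec, Matrix.nonsing_inv_mul B (isUnit_iff_ne_zero.mpr hB),
        Matrix.one_mulVec]
    rw [← hinv]
    exact (sqnorm_mulVec_le _ _).trans
      (mul_le_mul_of_nonneg_right (by linarith) (sum_nonneg fun _ _ => sq_nonneg _))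
  refine (summable_pi_prod_of_nonneg (fun _ => (Real.exp_pos _).le)
    (summable_exp_neg_sq_div (mul_pos hC hτ))).of_nonneg_of_le
    (fun _ => (Real.exp_pos _).le) fun z => ?_
  rw [← Real.exp_sum, Real.exp_le_exp, ← sum_div, sum_neg_distrib, neg_div, neg_div,
    neg_le_neg_iff]
  change sqnorm (fun k => (z k : ℝ)) / (C * τ) ≤ sqnorm (latp B z) / τ
  rw [div_le_div_iff₀ (mul_pos hC hτ) hτ]
  nlinarith [hcoercive z]

end Summability

theorem latp_sub {n : ℕ} (B : Matrix (Fin n) (Fin n) ℝ) (z w : Fin n → ℤ) :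
    latp B (z - w) = latp B z - latp B w := by
  simp only [latp, Pi.sub_apply, Int.cast_sub, ← Matrix.mulVec_sub]
  rfl

theorem tsum_exp_neg_sqnorm_sub_latp_le {n : ℕ} {B : Matrix (Fin n) (Fin n) ℝ} (hB : B.det ≠ 0)
    {τ : ℝ} (hτ : 0 < τ) (x : Fin n → ℝ) :
    ∑' z, Real.exp (-(sqnorm (x - latp B z)) / τ)
      ≤ ∑' z, Real.exp (-(sqnorm (0 - latp B z)) / τ) := by
  simp only [zero_sub, sqnorm_neg]
  refine tsum_le_tsum_of_sum_sum_intCube_le (fun _ => (Real.exp_pos _).le)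
    (fun _ => (Real.exp_pos _).le) (summable_exp_neg_sqnorm_latp hB hτ) fun N => ?_
  simp only [latp_sub]
  exact sum_sum_exp_neg_sqnorm_sub_sub_le _ _ x hτ

theorem periodicGauss_le_at_zero_general (n : ℕ) (B : Matrix (Fin n) (Fin n) ℝ)
    (hB : B.det ≠ 0) (σ : ℝ) (hσ : 0 < σ) (x : Fin n → ℝ) :
    periodicGauss B σ x ≤ periodicGauss B σ 0 :=
  mul_le_mul_of_nonneg_left (tsum_exp_neg_sqnorm_sub_latp_le hB (by positivity) x)
    (Real.rpow_nonneg (by positivity) _)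

theorem periodicGauss_le_at_zero (n : ℕ) (hn : 0 < n) (B : Matrix (Fin n) (Fin n) ℝ)
    (hB : B.det ≠ 0) (σ : ℝ) (hσ : 0 < σ) (x : Fin n → ℝ) :
    periodicGauss B σ x ≤ periodicGauss B σ 0 :=
  periodicGauss_le_at_zero_general n B hB σ hσ x

end
end

section
/- Among all probability distributions supported on a lattice Λ (or on a fixed subset S ⊆ Λ) with a given second moment E[‖x‖²] = E, the discrete Gaussian distribution D restricted to S with appropriately chosen parameter σ maximizes the Shannon entropy. -/
open Real

noncomputable section

/-- Among all probability distributions on a countable set `S` (e.g. a subset of a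
lattice) with the same second moment as the discrete Gaussian of parameter `σ` on
`S`, the discrete Gaussian maximizes the Shannon entropy. -/
theorem discrete_gaussian_max_entropy (n : ℕ) (S : Set (Fin n → ℝ)) (hS : S.Countable)
    (σ : ℝ) (hσ : 0 < σ)
    (Z : ℝ) (hZ : Z = ∑' x : S, Real.exp (-(sqnorm (x : Fin n → ℝ)) / (2 * σ ^ 2)))
    (hZs : Summable fun x : S => Real.exp (-(sqnorm (x : Fin n → ℝ)) / (2 * σ ^ 2)))
    (hZpos : 0 < Z)
    (p : S → ℝ) (hp : ∀ x : S, p x = Real.exp (-(sqnorm (x : Fin n → ℝ)) / (2 * σ ^ 2)) / Z)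
    (q : S → ℝ) (hq0 : ∀ x, 0 ≤ q x) (hq1 : (∑' x : S, q x) = 1)
    (hqE : Summable fun x : S => q x * sqnorm (x : Fin n → ℝ))
    (hpE : Summable fun x : S => p x * sqnorm (x : Fin n → ℝ))
    (hqH : Summable fun x : S => q x * Real.log (q x))
    (hE : (∑' x : S, q x * sqnorm (x : Fin n → ℝ)) =
          ∑' x : S, p x * sqnorm (x : Fin n → ℝ)) :
    (-∑' x : S, q x * Real.log (q x)) ≤ -∑' x : S, p x * Real.log (p x) := by
  have hppos : ∀ x : S, 0 < p x := by
    intro x; rw [hp]; positivity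
  have hlogp : ∀ x : S, Real.log (p x)
      = -(sqnorm (x : Fin n → ℝ)) / (2 * σ ^ 2) - Real.log Z := by
    intro x; rw [hp, Real.log_div (Real.exp_ne_zero _) hZpos.ne', Real.log_exp]
  have hqsum : Summable q := by
    by_contra h
    rw [tsum_eq_zero_of_not_summable h] at hq1; norm_num at hq1
  have hpsum : Summable p :=
    Summable.congr (hZs.div_const Z) fun x => (hp x).symm
  have hp1 : (∑' x : S, p x) = 1 := by
    simp only [hp]
    rw [tsum_div_const, ← hZ, div_self hZpos.ne']
  have hrw : ∀ (w : S → ℝ) (x : S), w x * Real.log (p x) =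
      (-(1 / (2 * σ ^ 2))) * (w x * sqnorm (x : Fin n → ℝ)) - Real.log Z * w x := by
    intro w x; rw [hlogp]; ring
  have hsum_wlp : ∀ w : S → ℝ, Summable w →
      Summable (fun x : S => w x * sqnorm (x : Fin n → ℝ)) →
      Summable (fun x : S => w x * Real.log (p x)) := by
    intro w hw hwf
    exact Summable.congr ((hwf.mul_left _).sub (hw.mul_left _)) fun x => (hrw w x).symm
  have htsum_wlp : ∀ w : S → ℝ, Summable w →
      Summable (fun x : S => w x * sqnorm (x : Fin n → ℝ)) →
      (∑' x : S, w x * Real.log (p x)) =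
        (-(1 / (2 * σ ^ 2))) * (∑' x : S, w x * sqnorm (x : Fin n → ℝ))
          - Real.log Z * (∑' x : S, w x) := by
    intro w hw hwf
    calc (∑' x : S, w x * Real.log (p x))
        = ∑' x : S, ((-(1 / (2 * σ ^ 2))) * (w x * sqnorm (x : Fin n → ℝ))
            - Real.log Z * w x) := tsum_congr (hrw w)
      _ = _ := by
          rw [Summable.tsum_sub (hwf.mul_left _) (hw.mul_left _), tsum_mul_left, tsum_mul_left]
  have hgibbs : ∀ x : S, q x - p x ≤ q x * Real.log (q x) - q x * Real.log (p x) := by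
    intro x
    rcases eq_or_lt_of_le (hq0 x) with h0 | h0
    · simp only [← h0, zero_mul, sub_zero, zero_sub, sub_self]
      linarith [(hppos x).le]
    · have hlog := Real.log_le_sub_one_of_pos (div_pos (hppos x) h0)
      rw [Real.log_div (hppos x).ne' h0.ne'] at hlog
      have h2 : q x * (Real.log (p x) - Real.log (q x)) ≤ q x * (p x / q x - 1) :=
        mul_le_mul_of_nonneg_left hlog h0.le
      have h3 : q x * (p x / q x - 1) = p x - q x := by field_simp
      rw [h3, mul_sub] at h2
      linarith
  have hqlp : Summable (fun x : S => q x * Real.log (p x)) := hsum_wlp q hqsum hqE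
  have hsub : (∑' x : S, (q x - p x))
      ≤ ∑' x : S, (q x * Real.log (q x) - q x * Real.log (p x)) :=
    Summable.tsum_le_tsum hgibbs (hqsum.sub hpsum) (hqH.sub hqlp)
  rw [Summable.tsum_sub hqsum hpsum, Summable.tsum_sub hqH hqlp, hq1, hp1] at hsub
  have heq : (∑' x : S, q x * Real.log (p x)) = ∑' x : S, p x * Real.log (p x) := by
    rw [htsum_wlp q hqsum hqE, htsum_wlp p hpsum hpE, hE, hq1, hp1]
  linarith

end
end
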